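/- Let n ≥ 1, w ∈ X_n, and set k := cdes(w⁻¹). Then for every j ∈ {1,…,n+1}, the vector v := v^j(w) ∈ ½ℤⁿ satisfies: 0 ≤ 2v_1 ≤ 1; 0 ≤ v_i − v_{i−1} ≤ 1 for all 2 ≤ i ≤ n; and k−1 ≤ 2v_n ≤ k. (Hence the simplex A(w) := Conv{v^1(w),…,v^{n+1}(w)} is contained in the type C hypersimplex Δ_{C_n,k} = {x ∈ ℝⁿ : 0 ≤ 2x_1, x_2−x_1, …, x_n−x_{n−1} ≤ 1, k−1 ≤ 2x_n ≤ k}.) -/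

import Mathlib

open scoped Classical

/-- A signed permutation of length `n`: a permutation `w` of `ℤ` with
`w(-i) = -w(i)` that fixes every integer of absolute value greater than `n`. -/
def IsSignedPerm (n : ℕ) (w : Equiv.Perm ℤ) : Prop :=
  (∀ i : ℤ, w (-i) = - w i) ∧ ∀ i : ℤ, (n : ℤ) < |i| → w i = i

/-- Membership in `X_n := {w ∈ 𝔅_n : w⁻¹(1) > 0}`. -/
def InXn (n : ℕ) (w : Equiv.Perm ℤ) : Prop :=
  IsSignedPerm n w ∧ 0 < w.symm 1

/-- The type B descent number `des_B(w) = #{i ∈ {0,…,n-1} : w_i > w_{i+1}}`,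
with the convention `w_0 = 0` (automatic, since a signed permutation fixes `0`). -/
noncomputable def desB (n : ℕ) (w : Equiv.Perm ℤ) : ℕ :=
  ((Finset.range n).filter fun i => w ((i : ℤ) + 1) < w (i : ℤ)).card

/-- The flag-excedance `fexc(w) = 2·#{i : w_i > i} + #{i : w_i < 0}`. -/
noncomputable def fexc (n : ℕ) (w : Equiv.Perm ℤ) : ℕ :=
  2 * ((Finset.Icc (1 : ℤ) (n : ℤ)).filter fun i => i < w i).card
    + ((Finset.Icc (1 : ℤ) (n : ℤ)).filter fun i => w i < 0).card

/-- The cyclic successor on `{-n,…,-1,1,…,n}` (with `(-1)⁺ = 1` and `n⁺ = -n`). -/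
def csucc (n : ℕ) (i : ℤ) : ℤ :=
  if i = -1 then 1 else if i = (n : ℤ) then -(n : ℤ) else i + 1

/-- The circular descent set `CDes(w) = {i ∈ {-n,…,-1,1,…,n} : w(i) > w(i⁺)}`. -/
noncomputable def cdesSet (n : ℕ) (w : Equiv.Perm ℤ) : Finset ℤ :=
  (Finset.Icc (-(n : ℤ)) (n : ℤ)).filter fun i => i ≠ 0 ∧ w (csucc n i) < w i

/-- The circular descent number `cdes(w) = |CDes(w)|`. -/
noncomputable def cdes (n : ℕ) (w : Equiv.Perm ℤ) : ℕ := (cdesSet n w).card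

/-- `a ≪ b`: there is a nonzero integer strictly between `a` and `b`. -/
def Lll (a b : ℤ) : Prop := ∃ c : ℤ, c ≠ 0 ∧ a < c ∧ c < b

/-- The big ascent number `basc(w) = |BAsc(w)|`, where `BAsc(w) ⊆ {-1,1,…,n}`:
`-1 ∈ BAsc(w)` iff `w_1 ≥ 2`; for `1 ≤ i ≤ n-1`, `i ∈ BAsc(w)` iff `w_i ≪ w_{i+1}`;
and `n ∈ BAsc(w)` iff `w_n ≤ -2`. -/
noncomputable def basc (n : ℕ) (w : Equiv.Perm ℤ) : ℕ :=
  ((insert (-1 : ℤ) (Finset.Icc (1 : ℤ) (n : ℤ))).filter fun i =>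
    if i = -1 then 2 ≤ w 1
    else if i = (n : ℤ) then w (n : ℤ) ≤ -2
    else Lll (w i) (w (i + 1))).card

/-- `L'_{n,k}(r)`: the number of half-integer points in the `r`-th dilate of the
half-open type C hypersimplex `Δ'_{C_n,k}`, in the `y`-coordinates. -/
noncomputable def Lp (n k r : ℕ) : ℕ :=
  if k = 1 then
    Set.ncard {y : Fin n → ℤ |
      (∀ j, 0 ≤ y j ∧ y j ≤ 2 * (r : ℤ)) ∧ (∀ j : Fin n, (j : ℕ) = 0 → y j ≤ (r : ℤ)) ∧
      0 ≤ ∑ j, y j ∧ ∑ j, y j ≤ (r : ℤ)}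
  else
    Set.ncard {y : Fin n → ℤ |
      (∀ j, 0 ≤ y j ∧ y j ≤ 2 * (r : ℤ)) ∧ (∀ j : Fin n, (j : ℕ) = 0 → y j ≤ (r : ℤ)) ∧
      ((k : ℤ) - 1) * r < ∑ j, y j ∧ ∑ j, y j ≤ (k : ℤ) * r}

/-- `L_{n,k}(r)`: the number of half-integer points in the `r`-th dilate of the
closed type C hypersimplex `Δ_{C_n,k}`, in the `y`-coordinates. -/
noncomputable def Lc (n k r : ℕ) : ℕ :=
  Set.ncard {y : Fin n → ℤ |
    (∀ j, 0 ≤ y j ∧ y j ≤ 2 * (r : ℤ)) ∧ (∀ j : Fin n, (j : ℕ) = 0 → y j ≤ (r : ℤ)) ∧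
    ((k : ℤ) - 1) * r ≤ ∑ j, y j ∧ ∑ j, y j ≤ (k : ℤ) * r}

/-- `ψ_{n,k} = #{w ∈ X_n : basc(w) = k}`. -/
noncomputable def psiN (n k : ℕ) : ℕ :=
  {w : Equiv.Perm ℤ | InXn n w ∧ basc n w = k}.ncard

/-- `ψ_{n,k}` with an integer index (`0` for negative `k`). -/
noncomputable def psiZ (n : ℕ) (k : ℤ) : ℕ :=
  {w : Equiv.Perm ℤ | InXn n w ∧ (basc n w : ℤ) = k}.ncard

/-- `Ψ_{C_n}(t) = Σ_k ψ_{n,k} t^k ∈ ℤ[t]`. -/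
noncomputable def PsiC (n : ℕ) : Polynomial ℤ :=
  ∑ᶠ k : ℕ, (psiN n k : Polynomial ℤ) * Polynomial.X ^ k

/-- `Ψ_{C_n}(t)` with rational coefficients. -/
noncomputable def PsiCQ (n : ℕ) : Polynomial ℚ :=
  ∑ᶠ k : ℕ, (psiN n k : Polynomial ℚ) * Polynomial.X ^ k

/-- The descent number of a permutation of `{1,…,m}`. -/
noncomputable def desA (m : ℕ) (σ : Equiv.Perm (Fin m)) : ℕ :=
  (Finset.univ.filter fun i : Fin m =>
    ∃ h : (i : ℕ) + 1 < m, σ ⟨(i : ℕ) + 1, h⟩ < σ i).card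

/-- The classical (type A) Eulerian polynomial `E_m^A(t) = Σ_{σ ∈ S_m} t^{des σ}`. -/
noncomputable def EulerianA (m : ℕ) : Polynomial ℚ :=
  ∑ σ : Equiv.Perm (Fin m), Polynomial.X ^ desA m σ

/-- The relation `u ⇀ w` on `X_n`. -/
def covRel (n : ℕ) (u w : Equiv.Perm ℤ) : Prop :=
  InXn n u ∧ InXn n w ∧
    ((2 ≤ w 1 ∧ u = w * Equiv.swap (1 : ℤ) (-1)) ∨
     (∃ i : ℤ, 1 ≤ i ∧ i ≤ (n : ℤ) - 1 ∧ Lll (w i) (w (i + 1)) ∧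
        u = w * (Equiv.swap i (i + 1) * Equiv.swap (-i) (-(i + 1)))) ∨
     (w (n : ℤ) ≤ -2 ∧ u = w * Equiv.swap (n : ℤ) (-(n : ℤ))))

/-- The `i`-th coordinate (`1 ≤ i ≤ n`) of the vertex `v^j(w)` (`1 ≤ j ≤ n+1`):
`v^{n+1}_i(w) = #({1,…,i-1} ∩ CDes(w⁻¹))` and `v^j = v^{j+1} + ½ e_{w_j}`. -/
noncomputable def vcoord (n : ℕ) (w : Equiv.Perm ℤ) (j : ℕ) (i : ℕ) : ℚ :=
  ((Finset.Icc (1 : ℤ) ((i : ℤ) - 1) ∩ cdesSet n w.symm).card : ℚ)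
    + (1 / 2) * ∑ m ∈ Finset.Icc (j : ℤ) (n : ℤ),
        (if w m = (i : ℤ) then (1 : ℚ) else if w m = -(i : ℤ) then -1 else 0)

/-- `u` is the image `τ_n(w)`: in window notation `u = 1 w'_1 ⋯ w'_n`, where
`w'_i = w_i + 1` if `w_i > 0` and `w'_i = w_i - 1` if `w_i < 0`. -/
def isTau (n : ℕ) (w u : Equiv.Perm ℤ) : Prop :=
  u 1 = 1 ∧ ∀ i : ℤ, 1 ≤ i → i ≤ (n : ℤ) →
    u (i + 1) = if 0 < w i then w i + 1 else w i - 1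

/-!
Write `u = w⁻¹`. The `i`-th coordinate of `v^j(w)` is `#([1, i-1] ∩ CDes u) + ½ t(u i)`, where
`t(b) ∈ {-1, 0, 1}` has the sign of `b` and is monotone in `b ∈ [-n, n]`. Hence `v_i - v_{i-1}` is
`½ (t(u i) - t(u (i-1)))`, plus `1` exactly when `u i < u (i-1)`; in both cases the monotonicity of
`t` puts it in `[0, 1]`. For the last coordinate, `CDes u` is invariant under `c ↦ -c - 1` on
`[-n, -2] ∪ [1, n-1]`, while `-1 ∉ CDes u` (as `u 1 > 0`) and `n ∈ CDes u ↔ u n > 0`; so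
`cdes u = 2 #([1, n-1] ∩ CDes u) + [u n > 0]`, and `t(u n)` has the sign of `u n`.
-/

open Finset

namespace IsSignedPerm

variable {n : ℕ} {w : Equiv.Perm ℤ}

lemma apply_zero (hw : IsSignedPerm n w) : w 0 = 0 := by
  have h := hw.1 0
  rw [neg_zero] at h
  omega

lemma symm (hw : IsSignedPerm n w) : IsSignedPerm n w.symm :=
  ⟨fun i => w.injective (by rw [hw.1, Equiv.apply_symm_apply, Equiv.apply_symm_apply]),
    fun i hi => by rw [Equiv.symm_apply_eq, hw.2 i hi]⟩

lemma apply_ne_zero (hw : IsSignedPerm n w) {i : ℤ} (hi : i ≠ 0) : w i ≠ 0 :=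
  fun h => hi (w.injective (h.trans hw.apply_zero.symm))

lemma abs_apply_le (hw : IsSignedPerm n w) {i : ℤ} (hi : |i| ≤ n) : |w i| ≤ n := by
  by_contra h
  have := hw.symm.2 (w i) (not_le.mp h)
  rw [Equiv.symm_apply_apply] at this
  rw [← this] at h
  exact h hi

end IsSignedPerm

lemma card_Icc_inter_eq_add_ite (S : Finset ℤ) {a b : ℤ} (h : a ≤ b) :
    (Icc a b ∩ S).card = (Icc a (b - 1) ∩ S).card + if b ∈ S then 1 else 0 := by
  have hIcc := insert_Icc_right_eq_Icc_add_one (a := a) (b := b - 1) (by omega)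
  rw [sub_add_cancel] at hIcc
  rw [← hIcc]
  split_ifs with hb
  · rw [insert_inter_of_mem hb, card_insert_of_notMem (by simp)]
  · rw [insert_inter_of_notMem hb, add_zero]

section cdesSet

variable {n : ℕ} {u : Equiv.Perm ℤ}

lemma mem_cdesSet_of_pos {c : ℤ} (hc : 0 < c) (hcn : c < n) :
    c ∈ cdesSet n u ↔ u (c + 1) < u c := by
  rw [cdesSet, mem_filter, mem_Icc, csucc, if_neg (by omega), if_neg (by omega)]
  constructor
  · exact fun h => h.2.2
  · exact fun h => ⟨⟨by omega, hcn.le⟩, hc.ne', h⟩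

lemma neg_one_mem_cdesSet_iff (hu : IsSignedPerm n u) (hn : 1 ≤ n) :
    -1 ∈ cdesSet n u ↔ u 1 < 0 := by
  rw [cdesSet, mem_filter, mem_Icc, csucc, if_pos rfl, hu.1]
  constructor
  · exact fun h => by omega
  · exact fun h => ⟨⟨by omega, by omega⟩, by omega, by omega⟩

lemma natCast_mem_cdesSet_iff (hu : IsSignedPerm n u) (hn : 1 ≤ n) :
    (n : ℤ) ∈ cdesSet n u ↔ 0 < u n := by
  rw [cdesSet, mem_filter, mem_Icc, csucc, if_neg (by omega), if_pos rfl, hu.1]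
  constructor
  · exact fun h => by omega
  · exact fun h => ⟨⟨by omega, le_rfl⟩, by omega, by omega⟩

lemma neg_sub_one_mem_cdesSet_iff (hu : IsSignedPerm n u) {c : ℤ} (hc : 0 < c) (hcn : c < n) :
    -c - 1 ∈ cdesSet n u ↔ c ∈ cdesSet n u := by
  rw [mem_cdesSet_of_pos hc hcn, cdesSet, mem_filter, mem_Icc, csucc, if_neg (by omega),
    if_neg (by omega), show -c - 1 + 1 = -c by ring, show -c - 1 = -(c + 1) by ring, hu.1, hu.1]
  constructor
  · exact fun h => by omega
  · exact fun h => ⟨⟨by omega, by omega⟩, by omega, by omega⟩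

lemma card_cdesSet (hu : IsSignedPerm n u) (hn : 1 ≤ n) :
    (cdesSet n u).card = 2 * (Icc 1 ((n : ℤ) - 1) ∩ cdesSet n u).card
      + (if -1 ∈ cdesSet n u then 1 else 0) + (if (n : ℤ) ∈ cdesSet n u then 1 else 0) := by
  set S := cdesSet n u
  have hsplit : S = (Icc (-(n : ℤ)) (-1) ∩ S) ∪ (Icc 1 (n : ℤ) ∩ S) := by
    ext c
    simp only [S, cdesSet, mem_union, mem_inter, mem_filter, mem_Icc]
    omega
  have hdisj : Disjoint (Icc (-(n : ℤ)) (-1) ∩ S) (Icc 1 (n : ℤ) ∩ S) :=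
    disjoint_left.mpr fun c h h' => by simp only [mem_inter, mem_Icc] at h h'; omega
  have hreflect : (Icc (-(n : ℤ)) (-2) ∩ S).card = (Icc 1 ((n : ℤ) - 1) ∩ S).card := by
    refine card_nbij' (fun c => -c - 1) (fun c => -c - 1) ?_ ?_ ?_ ?_
    · intro c hc
      simp only [coe_inter, coe_Icc, Set.mem_inter_iff, Set.mem_Icc, mem_coe] at hc ⊢
      have hmem := neg_sub_one_mem_cdesSet_iff hu (c := -c - 1) (by omega) (by omega)
      rw [show -(-c - 1) - 1 = c by ring] at hmem
      exact ⟨by omega, hmem.mp hc.2⟩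
    · intro c hc
      simp only [coe_inter, coe_Icc, Set.mem_inter_iff, Set.mem_Icc, mem_coe] at hc ⊢
      exact ⟨by omega, (neg_sub_one_mem_cdesSet_iff hu (by omega) (by omega)).mpr hc.2⟩
    · intro c _; ring
    · intro c _; ring
  have hcard := card_union_of_disjoint hdisj
  rw [← hsplit, card_Icc_inter_eq_add_ite S (b := -1) (by omega),
    card_Icc_inter_eq_add_ite S (a := 1) (by omega), show (-1 : ℤ) - 1 = -2 by norm_num,
    hreflect] at hcard
  rw [hcard]
  ring

lemma cdes_eq (hu : IsSignedPerm n u) (hn : 1 ≤ n) (hu1 : 0 < u 1) :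
    cdes n u = 2 * (Icc 1 ((n : ℤ) - 1) ∩ cdesSet n u).card + if 0 < u n then 1 else 0 := by
  simp only [cdes, card_cdesSet hu hn, neg_one_mem_cdesSet_iff hu hn,
    natCast_mem_cdesSet_iff hu hn, if_neg hu1.not_gt, add_zero]

end cdesSet

/-- `tailCoord j n (w⁻¹ i)` is the `i`-th coordinate of `e_{w_j} + ⋯ + e_{w_n}`, so that
`v^j_i(w) = v^{n+1}_i(w) + ½ tailCoord j n (w⁻¹ i)`. -/
def tailCoord (j n b : ℤ) : ℤ :=
  (if j ≤ b ∧ b ≤ n then 1 else 0) - (if j ≤ -b ∧ -b ≤ n then 1 else 0)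

section tailCoord

variable {j n a b : ℤ}

lemma tailCoord_bounds_of_pos (hj : 0 ≤ j) (hb : 0 < b) :
    0 ≤ tailCoord j n b ∧ tailCoord j n b ≤ 1 := by
  unfold tailCoord
  constructor <;> split_ifs <;> omega

lemma tailCoord_bounds_of_neg (hj : 0 ≤ j) (hb : b < 0) :
    -1 ≤ tailCoord j n b ∧ tailCoord j n b ≤ 0 := by
  unfold tailCoord
  constructor <;> split_ifs <;> omega

lemma abs_tailCoord_le_one : |tailCoord j n b| ≤ 1 := by
  unfold tailCoord
  rw [abs_le]
  constructor <;> split_ifs <;> omega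

lemma tailCoord_mono (ha : |a| ≤ n) (hb : |b| ≤ n) (hab : a ≤ b) :
    tailCoord j n a ≤ tailCoord j n b := by
  rw [abs_le] at ha hb
  unfold tailCoord
  split_ifs <;> omega

end tailCoord


section vcoord

variable {n : ℕ} {w : Equiv.Perm ℤ}

lemma sum_ite_eq_tailCoord (hw : IsSignedPerm n w) (j : ℤ) {i : ℤ}
    (hi : i ≠ 0) :
    ∑ m ∈ Icc j (n : ℤ), (if w m = i then (1 : ℚ) else if w m = -i then -1 else 0)
      = tailCoord j n (w.symm i) := by
  have hsummand : ∀ m, (if w m = i then (1 : ℚ) else if w m = -i then -1 else 0)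
      = (if w.symm i = m then 1 else 0) - (if -w.symm i = m then 1 else 0) := by
    intro m
    have e1 : w m = i ↔ w.symm i = m := by rw [Equiv.symm_apply_eq, eq_comm]
    have e2 : w m = -i ↔ -w.symm i = m := by rw [← hw.symm.1, Equiv.symm_apply_eq, eq_comm]
    have hne := hw.symm.apply_ne_zero hi
    simp only [e1, e2]
    split_ifs <;> grind
  rw [sum_congr rfl fun m _ => hsummand m, sum_sub_distrib, sum_ite_eq, sum_ite_eq, tailCoord]
  simp only [mem_Icc]
  push_cast
  rfl

lemma vcoord_eq (hw : IsSignedPerm n w) (j : ℕ) {i : ℕ} (hi : i ≠ 0) :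
    vcoord n w j i = (Icc 1 ((i : ℤ) - 1) ∩ cdesSet n w.symm).card
      + tailCoord j n (w.symm i) / 2 := by
  rw [vcoord, sum_ite_eq_tailCoord hw _ (by exact_mod_cast hi)]
  ring

lemma two_mul_vcoord_one_bounds (hw : InXn n w) (j : ℕ) :
    0 ≤ 2 * vcoord n w j 1 ∧ 2 * vcoord n w j 1 ≤ 1 := by
  have ht := tailCoord_bounds_of_pos (n := n) (Nat.cast_nonneg j) hw.2
  qify at ht
  rw [vcoord_eq hw.1 j one_ne_zero]
  norm_num
  constructor <;> linarith

lemma vcoord_sub_vcoord_pred_bounds (hw : IsSignedPerm n w) (j : ℕ) {i : ℕ} (hi : 2 ≤ i)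
    (hin : i ≤ n) :
    0 ≤ vcoord n w j i - vcoord n w j (i - 1) ∧ vcoord n w j i - vcoord n w j (i - 1) ≤ 1 := by
  rw [vcoord_eq hw j (by omega), vcoord_eq hw j (by omega : i - 1 ≠ 0), Nat.cast_sub (by omega),
    Nat.cast_one, card_Icc_inter_eq_add_ite _ (by omega : (1 : ℤ) ≤ i - 1)]
  set a := w.symm ((i : ℤ) - 1)
  set b := w.symm (i : ℤ)
  have ha : |a| ≤ n := hw.symm.abs_apply_le (by rw [abs_le]; omega)
  have hb : |b| ≤ n := hw.symm.abs_apply_le (by rw [abs_le]; omega)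
  have hdesc : (i : ℤ) - 1 ∈ cdesSet n w.symm ↔ b < a := by
    rw [mem_cdesSet_of_pos (by omega) (by omega), sub_add_cancel]
  have hta := abs_le.mp (abs_tailCoord_le_one (j := j) (n := n) (b := a))
  have htb := abs_le.mp (abs_tailCoord_le_one (j := j) (n := n) (b := b))
  qify at hta htb
  by_cases hba : b < a
  · have hmono := tailCoord_mono (j := j) hb ha hba.le
    qify at hmono
    rw [if_pos (hdesc.mpr hba)]
    push_cast
    constructor <;> linarith
  · have hmono := tailCoord_mono (j := j) ha hb (not_lt.mp hba)
    qify at hmono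
    rw [if_neg (hdesc.not.mpr hba)]
    push_cast
    constructor <;> linarith

lemma two_mul_vcoord_last_bounds (hw : InXn n w) (hn : 1 ≤ n) (j : ℕ) :
    (cdes n w.symm : ℚ) - 1 ≤ 2 * vcoord n w j n ∧ 2 * vcoord n w j n ≤ cdes n w.symm := by
  rw [vcoord_eq hw.1 j (by omega), cdes_eq hw.1.symm hn hw.2]
  rcases (hw.1.symm.apply_ne_zero (i := n) (by omega)).lt_or_gt with hneg | hpos
  · have ht := tailCoord_bounds_of_neg (n := n) (Nat.cast_nonneg j) hneg
    qify at ht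
    rw [if_neg hneg.not_gt]
    push_cast
    constructor <;> linarith
  · have ht := tailCoord_bounds_of_pos (n := n) (Nat.cast_nonneg j) hpos
    qify at ht
    rw [if_pos hpos]
    push_cast
    constructor <;> linarith

end vcoord

theorem alcove_in_hypersimplex_general (n : ℕ) (hn : 1 ≤ n) (w : Equiv.Perm ℤ) (hw : InXn n w)
    (j : ℕ) :
    (0 ≤ 2 * vcoord n w j 1 ∧ 2 * vcoord n w j 1 ≤ 1) ∧
    (∀ i : ℕ, 2 ≤ i → i ≤ n →
      0 ≤ vcoord n w j i - vcoord n w j (i - 1) ∧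
        vcoord n w j i - vcoord n w j (i - 1) ≤ 1) ∧
    ((cdes n w.symm : ℚ) - 1 ≤ 2 * vcoord n w j n ∧
      2 * vcoord n w j n ≤ (cdes n w.symm : ℚ)) :=
  ⟨two_mul_vcoord_one_bounds hw j, fun _ hi hin => vcoord_sub_vcoord_pred_bounds hw.1 j hi hin,
    two_mul_vcoord_last_bounds hw hn j⟩

/-- For `w ∈ X_n` with `k := cdes(w⁻¹)`, every vertex
`v = v^j(w)` (`1 ≤ j ≤ n+1`) satisfies `0 ≤ 2v_1 ≤ 1`, `0 ≤ v_i - v_{i-1} ≤ 1` for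
`2 ≤ i ≤ n`, and `k - 1 ≤ 2v_n ≤ k`; hence the alcove `A(w)` lies in `Δ_{C_n,k}`. -/
theorem alcove_in_hypersimplex (n : ℕ) (hn : 1 ≤ n) (w : Equiv.Perm ℤ) (hw : InXn n w)
    (j : ℕ) (hj1 : 1 ≤ j) (hj2 : j ≤ n + 1) :
    (0 ≤ 2 * vcoord n w j 1 ∧ 2 * vcoord n w j 1 ≤ 1) ∧
    (∀ i : ℕ, 2 ≤ i → i ≤ n →
      0 ≤ vcoord n w j i - vcoord n w j (i - 1) ∧
        vcoord n w j i - vcoord n w j (i - 1) ≤ 1) ∧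
    ((cdes n w.symm : ℚ) - 1 ≤ 2 * vcoord n w j n ∧
      2 * vcoord n w j n ≤ (cdes n w.symm : ℚ)) :=
  alcove_in_hypersimplex_general n hn w hw j
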